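/- arXiv:2508.15731 — 4 statements merged into one kernel-verified Lean document; each statement's English description precedes it below -/
import Mathlib

section
/- Let k be a field. There are precisely four weak factorization systems on the category of k-vector spaces: a pair (L, R) of classes of linear maps is a weak factorization system if and only if it equals one of the following four pairs: (1) (hom, iso); (2) (mon, epi); (3) (epi, mon); (4) (iso, hom). -/
universe u

open CategoryTheory

/-- Weak factorization system. -/
def IsWFS {C : Type*} [Category C] (L R : MorphismProperty C) : Prop :=
  (∀ {A B : C} (f : A ⟶ B), ∃ (E : C) (l : A ⟶ E) (r : E ⟶ B), L l ∧ R r ∧ l ≫ r = f) ∧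
    (∀ {A B : C} (l : A ⟶ B), L l ↔ ∀ {X Y : C} (r : X ⟶ Y), R r → HasLiftingProperty l r) ∧
    (∀ {X Y : C} (r : X ⟶ Y), R r ↔ ∀ {A B : C} (l : A ⟶ B), L l → HasLiftingProperty l r)

section Aux

variable {k : Type u} [Field k]

/-- For a nonzero vector there is a functional sending it to `1`. -/
lemma wfs_exists_functional {M : Type u} [AddCommGroup M] [Module k M] {x : M} (hx : x ≠ 0) :
    ∃ φ : M →ₗ[k] k, φ x = 1 := by
  obtain ⟨g, hg⟩ := (LinearMap.toSpanSingleton k M x).exists_leftInverse_of_injective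
    (LinearMap.ker_toSpanSingleton k hx)
  refine ⟨g, ?_⟩
  have := LinearMap.congr_fun hg 1
  simpa [LinearMap.toSpanSingleton_apply] using this

/-- If `l` lifts against `r` and `l` is not injective, then `r` is injective. -/
lemma wfs_injective_of_lift {M N X Y : ModuleCat.{u} k} {l : M ⟶ N} {r : X ⟶ Y}
    (h : HasLiftingProperty l r) (hl : ¬ Function.Injective l) : Function.Injective r := by
  haveI := h
  have key : ∀ x : X, r x = 0 → x = 0 := by
    intro x hx
    obtain ⟨a, b, hab, hne⟩ := Function.not_injective_iff.mp hl
    have hm0 : a - b ≠ 0 := sub_ne_zero.mpr hne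
    have hlm0 : l (a - b) = 0 := by rw [map_sub, hab, sub_self]
    obtain ⟨φ, hφ⟩ := wfs_exists_functional (k := k) hm0
    let u : M ⟶ X := ModuleCat.ofHom (φ.smulRight x)
    have sq : CommSq u l r (0 : N ⟶ Y) := ⟨by
      ext m
      show r (φ m • x) = (0 : ↑Y)
      rw [map_smul, hx, smul_zero]⟩
    have hfl := sq.fac_left
    have h1 := ConcreteCategory.congr_hom hfl (a - b)
    have h2 : (l ≫ sq.lift) (a - b) = sq.lift (l (a - b)) := rfl
    rw [h2, hlm0, map_zero] at h1
    have h3 : u (a - b) = φ (a - b) • x := rfl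
    rw [h3, hφ, one_smul] at h1
    exact h1.symm
  intro a b hab
  have : a - b = 0 := key _ (by rw [map_sub, hab, sub_self])
  exact sub_eq_zero.mp this

/-- If `l` lifts against `r` and `l` is not surjective, then `r` is surjective. -/
lemma wfs_surjective_of_lift {M N X Y : ModuleCat.{u} k} {l : M ⟶ N} {r : X ⟶ Y}
    (h : HasLiftingProperty l r) (hl : ¬ Function.Surjective l) : Function.Surjective r := by
  haveI := h
  intro y
  obtain ⟨n0, hn0⟩ : ∃ n : N, n ∉ LinearMap.range l.hom := by
    by_contra hc
    push_neg at hc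
    exact hl fun n => hc n
  have hq : (Submodule.Quotient.mk n0 : N ⧸ LinearMap.range l.hom) ≠ 0 := by
    simpa [Submodule.Quotient.mk_eq_zero] using hn0
  obtain ⟨φ, hφ⟩ := wfs_exists_functional (k := k) hq
  let ψ : N →ₗ[k] k := φ.comp (LinearMap.range l.hom).mkQ
  let v : N ⟶ Y := ModuleCat.ofHom (ψ.smulRight y)
  have sq : CommSq (0 : M ⟶ X) l r v := ⟨by
    ext m
    have hm : ψ (l m) = 0 := by
      have : (LinearMap.range l.hom).mkQ (l m) = 0 := by
        simp [Submodule.mkQ_apply, Submodule.Quotient.mk_eq_zero]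
      simp [ψ, LinearMap.comp_apply, this]
    show r ((0 : M ⟶ X) m) = v (l m)
    have h0 : (0 : M ⟶ X) m = 0 := rfl
    have h2 : v (l m) = ψ (l m) • y := rfl
    rw [h0, map_zero, h2, hm, zero_smul]⟩
  refine ⟨sq.lift n0, ?_⟩
  have h1 := ConcreteCategory.congr_hom sq.fac_right n0
  have h2 : (sq.lift ≫ r) n0 = r (sq.lift n0) := rfl
  have h3 : v n0 = ψ n0 • y := rfl
  have h4 : ψ n0 = 1 := hφ
  rw [h2, h3, h4, one_smul] at h1
  exact h1

/-- Monomorphisms lift against epimorphisms in vector spaces. -/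
lemma wfs_lift_of_inj_surj {M N X Y : ModuleCat.{u} k} {l : M ⟶ N} {r : X ⟶ Y}
    (hl : Function.Injective l) (hr : Function.Surjective r) : HasLiftingProperty l r := by
  constructor
  intro f g sq
  obtain ⟨σ, hσ⟩ := l.hom.exists_leftInverse_of_injective
    (LinearMap.ker_eq_bot.mpr hl)
  haveI : Module.Projective k Y := Module.Projective.of_free
  obtain ⟨τ, hτ⟩ := r.hom.exists_rightInverse_of_surjective
    (LinearMap.range_eq_top.mpr hr)
  apply CommSq.HasLift.mk'
  refine
    { l := ModuleCat.ofHom (f.hom.comp σ +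
        τ.comp ((g.hom).comp (LinearMap.id - l.hom.comp σ))),
      fac_left := ?_, fac_right := ?_ }
  · ext m
    have hσl : σ (l m) = m := LinearMap.congr_fun hσ m
    show f (σ (l m)) + τ (g (l m - l (σ (l m)))) = f m
    rw [hσl, sub_self, map_zero, map_zero, add_zero]
  · ext n
    have hτ' : ∀ z : Y, r (τ z) = z := fun z => LinearMap.congr_fun hτ z
    have hw : ∀ m : M, r (f m) = g (l m) := fun m => ConcreteCategory.congr_hom sq.w m
    show r (f (σ n) + τ (g (n - l (σ n)))) = g n
    rw [map_add, hτ', hw, map_sub]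
    abel

/-- Epimorphisms lift against monomorphisms in vector spaces. -/
lemma wfs_lift_of_surj_inj {M N X Y : ModuleCat.{u} k} {l : M ⟶ N} {r : X ⟶ Y}
    (hl : Function.Surjective l) (hr : Function.Injective r) : HasLiftingProperty l r := by
  constructor
  intro f g sq
  haveI : Module.Projective k N := Module.Projective.of_free
  obtain ⟨σ, hσ⟩ := l.hom.exists_rightInverse_of_surjective
    (LinearMap.range_eq_top.mpr hl)
  apply CommSq.HasLift.mk'
  have hw : ∀ m : M, r (f m) = g (l m) := fun m => ConcreteCategory.congr_hom sq.w m
  have hσ' : ∀ n : N, l (σ n) = n := fun n => LinearMap.congr_fun hσ n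
  refine { l := ModuleCat.ofHom (f.hom.comp σ), fac_left := ?_, fac_right := ?_ }
  · ext m
    show f (σ (l m)) = f m
    apply hr
    rw [hw, hw, hσ']
  · ext n
    show r (f (σ n)) = g n
    rw [hw, hσ']

/-- A morphism with the lifting property against itself is an isomorphism. -/
lemma wfs_isIso_of_self_lift {C : Type*} [Category C] {X Y : C} (r : X ⟶ Y)
    (h : HasLiftingProperty r r) : IsIso r := by
  haveI := h
  have sq : CommSq (𝟙 X) r r (𝟙 Y) := ⟨by simp⟩
  exact ⟨sq.lift, sq.fac_left, sq.fac_right⟩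

/-- The projection `k × k → k`: surjective but not injective. -/
noncomputable def wfsPr (k : Type u) [Field k] :
    ModuleCat.of k (k × k) ⟶ ModuleCat.of k k := ModuleCat.ofHom (LinearMap.fst k k k)

lemma wfsPr_surj : Function.Surjective (wfsPr k) := fun x => ⟨(x, 0), rfl⟩

lemma wfsPr_not_inj : ¬ Function.Injective (wfsPr k) := by
  intro h
  have : ((0 : k), (0 : k)) = ((0 : k), (1 : k)) := h rfl
  simpa using congrArg Prod.snd this

/-- The inclusion `k → k × k`: injective but not surjective. -/
noncomputable def wfsIn (k : Type u) [Field k] :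
    ModuleCat.of k k ⟶ ModuleCat.of k (k × k) := ModuleCat.ofHom (LinearMap.inl k k k)

lemma wfsIn_inj : Function.Injective (wfsIn k) := fun a b h => by
  exact congrArg Prod.fst h

lemma wfsIn_not_surj : ¬ Function.Surjective (wfsIn k) := by
  intro h
  obtain ⟨x, hx⟩ := h ((0 : k), (1 : k))
  have h2 : ((x : k), (0 : k)) = ((0 : k), (1 : k)) := hx
  exact zero_ne_one (congrArg Prod.snd h2)

end Aux

/-- **The four weak factorization systems on the category of `k`-vector spaces
(Goodwillie).** -/
theorem vect_wfs_classification (k : Type u) [Field k]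
    (L R : MorphismProperty (ModuleCat.{u} k)) :
    IsWFS L R ↔
      ((L = (fun _ _ _ => True) ∧ R = (fun _ _ f => IsIso f)) ∨
       (L = (fun (M N : ModuleCat.{u} k) (f : M ⟶ N) => Function.Injective f) ∧
          R = (fun (M N : ModuleCat.{u} k) (f : M ⟶ N) => Function.Surjective f)) ∨
       (L = (fun (M N : ModuleCat.{u} k) (f : M ⟶ N) => Function.Surjective f) ∧
          R = (fun (M N : ModuleCat.{u} k) (f : M ⟶ N) => Function.Injective f)) ∨
       (L = (fun _ _ f => IsIso f) ∧ R = (fun _ _ _ => True))) := by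
  constructor
  · rintro ⟨hfac, hL, hR⟩
    by_cases hA : ∀ (M N : ModuleCat.{u} k) (l : M ⟶ N), L l → Function.Injective l
    · by_cases hB : ∀ (M N : ModuleCat.{u} k) (l : M ⟶ N), L l → Function.Surjective l
      · -- (iso, hom)
        refine Or.inr (Or.inr (Or.inr ⟨?_, ?_⟩))
        · funext M N f
          apply propext
          constructor
          · intro hf
            exact (ConcreteCategory.isIso_iff_bijective f).mpr ⟨hA _ _ f hf, hB _ _ f hf⟩
          · intro hf
            rw [hL]
            intro X Y r _
            haveI := hf
            infer_instance
        · funext X Y r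
          apply eq_true
          rw [hR]
          intro A B l hl
          haveI : IsIso l := (ConcreteCategory.isIso_iff_bijective l).mpr
            ⟨hA _ _ l hl, hB _ _ l hl⟩
          infer_instance
      · -- (mono, epi)
        push_neg at hB
        obtain ⟨M0, N0, l0, hl0, hl0s⟩ := hB
        have hRsurj : ∀ {X Y : ModuleCat.{u} k} (r : X ⟶ Y), R r → Function.Surjective r :=
          fun r hr => wfs_surjective_of_lift ((hL l0).mp hl0 r hr) hl0s
        refine Or.inr (Or.inl ⟨?_, ?_⟩)
        · funext M N f
          apply propext
          constructor
          · exact hA _ _ f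
          · intro hf
            rw [hL]
            intro X Y r hr
            exact wfs_lift_of_inj_surj hf (hRsurj r hr)
        · funext X Y r
          apply propext
          constructor
          · exact hRsurj r
          · intro hr
            rw [hR]
            intro A B l hl
            exact wfs_lift_of_inj_surj (hA _ _ l hl) hr
    · push_neg at hA
      obtain ⟨M0, N0, l0, hl0, hl0i⟩ := hA
      have hRinj : ∀ {X Y : ModuleCat.{u} k} (r : X ⟶ Y), R r → Function.Injective r :=
        fun r hr => wfs_injective_of_lift ((hL l0).mp hl0 r hr) hl0i
      by_cases hB : ∀ (M N : ModuleCat.{u} k) (l : M ⟶ N), L l → Function.Surjective l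
      · -- (epi, mono)
        refine Or.inr (Or.inr (Or.inl ⟨?_, ?_⟩))
        · funext M N f
          apply propext
          constructor
          · exact hB _ _ f
          · intro hf
            rw [hL]
            intro X Y r hr
            exact wfs_lift_of_surj_inj hf (hRinj r hr)
        · funext X Y r
          apply propext
          constructor
          · exact hRinj r
          · intro hr
            rw [hR]
            intro A B l hl
            exact wfs_lift_of_surj_inj (hB _ _ l hl) hr
      · -- (hom, iso)
        push_neg at hB
        obtain ⟨M1, N1, l1, hl1, hl1s⟩ := hB
        have hRsurj : ∀ {X Y : ModuleCat.{u} k} (r : X ⟶ Y), R r → Function.Surjective r :=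
          fun r hr => wfs_surjective_of_lift ((hL l1).mp hl1 r hr) hl1s
        refine Or.inl ⟨?_, ?_⟩
        · funext M N f
          apply eq_true
          rw [hL]
          intro X Y r hr
          haveI : IsIso r := (ConcreteCategory.isIso_iff_bijective r).mpr
            ⟨hRinj r hr, hRsurj r hr⟩
          infer_instance
        · funext X Y r
          apply propext
          constructor
          · intro hr
            exact (ConcreteCategory.isIso_iff_bijective r).mpr ⟨hRinj r hr, hRsurj r hr⟩
          · intro hr
            rw [hR]
            intro A B l _
            haveI := hr
            infer_instance
  · rintro (⟨rfl, rfl⟩ | ⟨rfl, rfl⟩ | ⟨rfl, rfl⟩ | ⟨rfl, rfl⟩)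
    · -- (hom, iso)
      refine ⟨fun {A B} f => ⟨B, f, 𝟙 B, trivial, inferInstance, Category.comp_id f⟩, ?_, ?_⟩
      · intro A B l
        constructor
        · intro _ X Y r hr
          haveI : IsIso r := hr
          infer_instance
        · intro _; trivial
      · intro X Y r
        constructor
        · intro hr A B l _
          haveI : IsIso r := hr
          infer_instance
        · intro h
          exact wfs_isIso_of_self_lift r (h r trivial)
    · -- (mono, epi)
      refine ⟨?_, ?_, ?_⟩
      · intro A B f
        refine ⟨ModuleCat.of k (A × B),
          ModuleCat.ofHom (LinearMap.prod LinearMap.id f.hom),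
          ModuleCat.ofHom (LinearMap.snd k A B), ?_, ?_, ?_⟩
        · intro a b hab
          simpa using congrArg Prod.fst hab
        · exact fun b => ⟨(0, b), rfl⟩
        · ext a; rfl
      · intro A B l
        constructor
        · intro hl X Y r hr
          exact wfs_lift_of_inj_surj hl hr
        · intro h
          by_contra hni
          exact wfsPr_not_inj (wfs_injective_of_lift (h (wfsPr k) wfsPr_surj) hni)
      · intro X Y r
        constructor
        · intro hr A B l hl
          exact wfs_lift_of_inj_surj hl hr
        · intro h
          exact wfs_surjective_of_lift (h (wfsIn k) wfsIn_inj) wfsIn_not_surj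
    · -- (epi, mono)
      refine ⟨?_, ?_, ?_⟩
      · intro A B f
        refine ⟨ModuleCat.of k (LinearMap.range f.hom),
          ModuleCat.ofHom f.hom.rangeRestrict,
          ModuleCat.ofHom (LinearMap.range f.hom).subtype, ?_, ?_, ?_⟩
        · exact LinearMap.surjective_rangeRestrict _
        · exact Subtype.val_injective
        · ext a; rfl
      · intro A B l
        constructor
        · intro hl X Y r hr
          exact wfs_lift_of_surj_inj hl hr
        · intro h
          by_contra hns
          exact wfsIn_not_surj (wfs_surjective_of_lift (h (wfsIn k) wfsIn_inj) hns)
      · intro X Y r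
        constructor
        · intro hr A B l hl
          exact wfs_lift_of_surj_inj hl hr
        · intro h
          exact wfs_injective_of_lift (h (wfsPr k) wfsPr_surj) wfsPr_not_inj
    · -- (iso, hom)
      refine ⟨fun {A B} f => ⟨A, 𝟙 A, f, inferInstance, trivial, Category.id_comp f⟩, ?_, ?_⟩
      · intro A B l
        constructor
        · intro hl X Y r _
          haveI : IsIso l := hl
          infer_instance
        · intro h
          exact wfs_isIso_of_self_lift l (h l trivial)
      · intro X Y r
        constructor
        · intro _ A B l hl
          haveI : IsIso l := hl
          infer_instance
        · intro _; trivial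
end

section
/- Let k be a field. There are precisely five model structures on the category of k-vector spaces: a triple (C, F, W) of classes of linear maps is a model structure if and only if it equals one of: (1) (hom, hom, iso); (2) (hom, iso, hom); (3) (iso, hom, hom); (4) (mon, epi, hom); (5) (epi, mon, hom). -/
universe u

open CategoryTheory

/-- The 2-out-of-3 property for a class of morphisms. -/
def TwoOutOfThree {C : Type*} [Category C] (W : MorphismProperty C) : Prop :=
  ∀ {A B D : C} (f : A ⟶ B) (g : B ⟶ D),
    (W f → W g → W (f ≫ g)) ∧ (W f → W (f ≫ g) → W g) ∧ (W g → W (f ≫ g) → W f)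

/-- The intersection of two classes of morphisms. -/
def interMP {C : Type*} [Category C] (P Q : MorphismProperty C) : MorphismProperty C :=
  fun _ _ f => P f ∧ Q f

/-- A model structure. -/
def IsModelStructure {𝒞 : Type*} [Category 𝒞] (C F W : MorphismProperty 𝒞) : Prop :=
  TwoOutOfThree W ∧ IsWFS (interMP C W) F ∧ IsWFS C (interMP F W)

namespace VMSAux

variable {k : Type u} [Field k]

lemma exists_functional {V : Type u} [AddCommGroup V] [Module k V] {a : V} (ha : a ≠ 0) :
    ∃ φ : V →ₗ[k] k, φ a = 1 := by
  obtain ⟨g, hg⟩ := (LinearMap.toSpanSingleton k V a).exists_leftInverse_of_injective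
    (LinearMap.ker_toSpanSingleton k ha)
  exact ⟨g, by simpa using LinearMap.congr_fun hg 1⟩

lemma hlp_of_surj_inj {A B X Y : ModuleCat.{u} k} (l : A ⟶ B) (r : X ⟶ Y)
    (hl : Function.Surjective l) (hr : Function.Injective r) : HasLiftingProperty l r := by
  have : Module.Projective k B := Module.Projective.of_free
  obtain ⟨s, hs⟩ := l.hom.exists_rightInverse_of_surjective
    (LinearMap.range_eq_top.2 hl)
  constructor
  intro t b sq
  refine CommSq.HasLift.mk' ⟨ModuleCat.ofHom (t.hom.comp s), ?_, ?_⟩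
  · ext a
    apply hr
    have h1 := LinearMap.congr_fun hs (l a)
    have h2 := ConcreteCategory.congr_hom sq.w a
    have h3 := ConcreteCategory.congr_hom sq.w (s (l a))
    simp only [CategoryTheory.comp_apply, LinearMap.comp_apply, LinearMap.id_apply] at h1 h2 h3
    show r (t (s (l a))) = r (t a)
    rw [h3, h1, ← h2]
  · ext b'
    have h1 := LinearMap.congr_fun hs b'
    have h2 := ConcreteCategory.congr_hom sq.w (s b')
    simp only [CategoryTheory.comp_apply, LinearMap.comp_apply, LinearMap.id_apply] at h1 h2
    show r (t (s b')) = b b'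
    rw [h2, h1]

lemma hlp_of_inj_surj {A B X Y : ModuleCat.{u} k} (l : A ⟶ B) (r : X ⟶ Y)
    (hl : Function.Injective l) (hr : Function.Surjective r) : HasLiftingProperty l r := by
  obtain ⟨g, hg⟩ := l.hom.exists_leftInverse_of_injective (LinearMap.ker_eq_bot.2 hl)
  have : Module.Projective k Y := Module.Projective.of_free
  obtain ⟨s, hs⟩ := r.hom.exists_rightInverse_of_surjective
    (LinearMap.range_eq_top.2 hr)
  constructor
  intro t b sq
  have hgl : ∀ a : A, g (l a) = a := fun a => LinearMap.congr_fun hg a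
  have hrs : ∀ y : Y, r (s y) = y := fun y => LinearMap.congr_fun hs y
  have hw : ∀ a : A, r (t a) = b (l a) := fun a => by
    have h2 := ConcreteCategory.congr_hom sq.w a
    simpa only [CategoryTheory.comp_apply, LinearMap.comp_apply] using h2
  set ψ : (B : Type u) →ₗ[k] (Y : Type u) :=
    b.hom - (r.hom.comp
      (t.hom.comp g)) with hψ
  have hψl : ∀ a : A, ψ (l a) = 0 := fun a => by
    show b (l a) - r (t (g (l a))) = 0
    rw [hgl, hw]
    exact sub_self _
  set d : (B : Type u) →ₗ[k] (X : Type u) :=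
    (t.hom.comp g) + s.comp
      (ψ.comp (LinearMap.id - l.hom.comp g)) with hd
  refine CommSq.HasLift.mk' ⟨ModuleCat.ofHom d, ?_, ?_⟩
  · ext a
    show t (g (l a)) + s (ψ (l a - l (g (l a)))) = t a
    rw [hgl, sub_self, map_zero, map_zero, add_zero]
  · ext b'
    show r (t (g b') + s (ψ (b' - l (g b')))) = b b'
    rw [map_add, hrs, map_sub, hψl, sub_zero]
    show r (t (g b')) + (b b' - r (t (g b'))) = b b'
    abel

lemma not_hlp_of_noninj {A B X Y : ModuleCat.{u} k} (l : A ⟶ B) (r : X ⟶ Y)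
    (hl : ¬ Function.Injective l) (hr : ¬ Function.Injective r) : ¬ HasLiftingProperty l r := by
  intro h
  rw [Function.not_injective_iff] at hl hr
  obtain ⟨a₁, a₂, hla, hane⟩ := hl
  obtain ⟨x₁, x₂, hrx, hxne⟩ := hr
  have ha : a₁ - a₂ ≠ 0 := sub_ne_zero.2 hane
  have hx : x₁ - x₂ ≠ 0 := sub_ne_zero.2 hxne
  have hla0 : l (a₁ - a₂) = 0 := by rw [map_sub, hla, sub_self]
  have hrx0 : r (x₁ - x₂) = 0 := by rw [map_sub, hrx, sub_self]
  obtain ⟨φ, hφ⟩ := exists_functional (k := k) ha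
  have sq : CommSq (ModuleCat.ofHom (φ.smulRight (x₁ - x₂) : (A : Type u) →ₗ[k] (X : Type u)))
      l r (0 : B ⟶ Y) := by
    constructor
    ext u
    show r (φ u • (x₁ - x₂)) = (0 : B ⟶ Y).hom (l u)
    rw [map_smul, hrx0, smul_zero]
    rfl
  have hlift := (h.sq_hasLift sq).exists_lift.some
  have h2 := ConcreteCategory.congr_hom hlift.fac_left (a₁ - a₂)
  simp only [CategoryTheory.comp_apply, LinearMap.comp_apply] at h2
  rw [hla0, map_zero] at h2
  have h3 : (0 : (X : Type u)) = φ (a₁ - a₂) • (x₁ - x₂) := h2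
  rw [hφ, one_smul] at h3
  exact hx h3.symm

lemma not_hlp_of_nonsurj {A B X Y : ModuleCat.{u} k} (l : A ⟶ B) (r : X ⟶ Y)
    (hl : ¬ Function.Surjective l) (hr : ¬ Function.Surjective r) : ¬ HasLiftingProperty l r := by
  intro h
  obtain ⟨b₀, hb₀⟩ := not_forall.1 hl
  obtain ⟨y₀, hy₀⟩ := not_forall.1 hr
  have hb₀' : b₀ ∉ LinearMap.range l.hom := by
    simpa only [LinearMap.mem_range] using hb₀
  have hy₀' : y₀ ∉ LinearMap.range r.hom := by
    simpa only [LinearMap.mem_range] using hy₀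
  have hq : (LinearMap.range l.hom).mkQ b₀ ≠ 0 := by
    rw [Submodule.mkQ_apply, Ne, Submodule.Quotient.mk_eq_zero]
    exact hb₀'
  obtain ⟨φ, hφ⟩ := exists_functional (k := k) hq
  have sq : CommSq (0 : A ⟶ X) l r
      (ModuleCat.ofHom ((φ.comp (LinearMap.range l.hom).mkQ).smulRight y₀ :
        (B : Type u) →ₗ[k] (Y : Type u))) := by
    constructor
    ext a
    show r ((0 : A ⟶ X).hom a) = φ ((LinearMap.range
      l.hom).mkQ (l a)) • y₀
    have : (LinearMap.range l.hom).mkQ (l a) = 0 := by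
      rw [Submodule.mkQ_apply, Submodule.Quotient.mk_eq_zero]
      exact ⟨a, rfl⟩
    rw [this, map_zero, zero_smul]
    erw [LinearMap.zero_apply, map_zero]
  have hlift := (h.sq_hasLift sq).exists_lift.some
  have h2 := ConcreteCategory.congr_hom hlift.fac_right b₀
  simp only [CategoryTheory.comp_apply, LinearMap.comp_apply] at h2
  have h3 : r (hlift.l b₀) = φ ((LinearMap.range l.hom).mkQ b₀)
      • y₀ := h2
  rw [hφ, one_smul] at h3
  exact hy₀' ⟨hlift.l b₀, h3⟩

lemma isIso_of_bijective {A B : ModuleCat.{u} k} (f : A ⟶ B) (hf : Function.Bijective f) :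
    IsIso f := by
  let e := LinearEquiv.ofBijective f.hom hf
  refine ⟨ModuleCat.ofHom e.symm.toLinearMap, ?_, ?_⟩
  · ext a
    show e.symm (f a) = a
    exact e.symm_apply_apply a
  · ext b
    show f (e.symm b) = b
    exact e.apply_symm_apply b

lemma bijective_of_iso {A B : ModuleCat.{u} k} (f : A ⟶ B) (hf : IsIso f) :
    Function.Bijective f := by
  obtain ⟨g, hg1, hg2⟩ := hf.out
  constructor
  · intro x y hxy
    have h1 : g (f x) = x := ConcreteCategory.congr_hom hg1 x
    have h2 : g (f y) = y := ConcreteCategory.congr_hom hg1 y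
    rw [← h1, ← h2, hxy]
  · intro b
    exact ⟨g b, ConcreteCategory.congr_hom hg2 b⟩

lemma isIso_of_hlp_self {A B : ModuleCat.{u} k} (l : A ⟶ B) (h : HasLiftingProperty l l) :
    IsIso l := by
  have sq : CommSq (𝟙 A) l l (𝟙 B) := ⟨by simp⟩
  have hlift := (h.sq_hasLift sq).exists_lift.some
  exact ⟨hlift.l, hlift.fac_left, hlift.fac_right⟩

/-! ### Named morphism classes -/

variable (k)

abbrev Pall : MorphismProperty (ModuleCat.{u} k) := fun _ _ _ => True
abbrev Piso : MorphismProperty (ModuleCat.{u} k) := fun _ _ f => IsIso f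
abbrev Pmon : MorphismProperty (ModuleCat.{u} k) :=
  fun (M N : ModuleCat.{u} k) (f : M ⟶ N) => Function.Injective f
abbrev Pepi : MorphismProperty (ModuleCat.{u} k) :=
  fun (M N : ModuleCat.{u} k) (f : M ⟶ N) => Function.Surjective f

abbrev Zmod : ModuleCat.{u} k := ModuleCat.of k PUnit.{u+1}
abbrev Kmod : ModuleCat.{u} k := ModuleCat.of k k
abbrev K2mod : ModuleCat.{u} k := ModuleCat.of k (k × k)

def toK (x : k) : (Kmod k : Type u) := x

def toK2 (x y : k) : (K2mod k : Type u) := (x, y)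

def pMap : Kmod k ⟶ Zmod k := 0
def mMap : Zmod k ⟶ Kmod k := 0
def iMap : Kmod k ⟶ K2mod k := ModuleCat.ofHom (LinearMap.inl k k k)
def piMap : K2mod k ⟶ Kmod k := ModuleCat.ofHom (LinearMap.fst k k k)

variable {k}

instance : Subsingleton (Zmod k : Type u) := inferInstanceAs (Subsingleton PUnit)

lemma zhom_ext {W : ModuleCat.{u} k} (f g : W ⟶ Zmod k) : f = g :=
  ModuleCat.hom_ext (LinearMap.ext fun _ => Subsingleton.elim _ _)

lemma zhom_ext' {W : ModuleCat.{u} k} (f g : Zmod k ⟶ W) : f = g :=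
  ModuleCat.hom_ext (LinearMap.ext fun u => by rw [Subsingleton.elim u 0, map_zero, map_zero])

lemma mp_ext {P Q : MorphismProperty (ModuleCat.{u} k)}
    (h : ∀ (M N : ModuleCat.{u} k) (f : M ⟶ N), P f ↔ Q f) : P = Q :=
  funext fun M => funext fun N => funext fun f => propext (h M N f)

lemma pMap_surj : Function.Surjective (pMap k) := fun y => ⟨0, Subsingleton.elim _ _⟩

lemma pMap_noninj : ¬ Function.Injective (pMap k) := fun h => by
  have h1 : toK k (1 : k) = toK k (0 : k) := h (Subsingleton.elim _ _)
  exact one_ne_zero (show (1 : k) = 0 from h1)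

lemma mMap_inj : Function.Injective (mMap k) := fun a b _ => Subsingleton.elim a b

lemma mMap_nonsurj : ¬ Function.Surjective (mMap k) := by
  intro h
  obtain ⟨a, ha⟩ := h (toK k (1 : k))
  rw [Subsingleton.elim a (0 : (Zmod k : Type u)), map_zero] at ha
  exact zero_ne_one (show (0 : k) = 1 from ha)

lemma iMap_inj : Function.Injective (iMap k) := fun x y h => by simpa [iMap] using congrArg Prod.fst h

lemma iMap_nonsurj : ¬ Function.Surjective (iMap k) := by
  intro h
  obtain ⟨a, ha⟩ := h (toK2 k (0 : k) (1 : k))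
  have h1 : (0 : k) = 1 := by simpa [iMap, toK2] using congrArg Prod.snd ha
  exact zero_ne_one h1

lemma piMap_surj : Function.Surjective (piMap k) := fun x => ⟨(x, 0), by simp [piMap]⟩

lemma piMap_noninj : ¬ Function.Injective (piMap k) := by
  intro h
  have h1 : toK2 k (0 : k) (0 : k) = toK2 k (0 : k) (1 : k) := h (by simp [piMap, toK2])
  exact zero_ne_one (congrArg Prod.snd h1)

lemma iMap_comp_piMap : iMap k ≫ piMap k = 𝟙 (Kmod k) := by
  ext x
  simp [iMap, piMap]

/-! ### The four weak factorization systems -/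

lemma wfs_iso_all : IsWFS (Piso k) (Pall k) := by
  refine ⟨fun {A B} f => ⟨A, 𝟙 A, f, ?_, trivial, Category.id_comp f⟩,
    fun {A B} l => ⟨fun hl {X Y} r _ => ?_, fun h => ?_⟩,
    fun {X Y} r => ⟨fun _ {A B} l hl => ?_, fun _ => trivial⟩⟩
  · show IsIso (𝟙 A)
    infer_instance
  · haveI : IsIso l := hl
    exact HasLiftingProperty.of_left_iso l r
  · exact isIso_of_hlp_self l (h l trivial)
  · haveI : IsIso l := hl
    exact HasLiftingProperty.of_left_iso l r

lemma wfs_all_iso : IsWFS (Pall k) (Piso k) := by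
  refine ⟨fun {A B} f => ⟨B, f, 𝟙 B, trivial, ?_, Category.comp_id f⟩,
    fun {A B} l => ⟨fun _ {X Y} r hr => ?_, fun _ => trivial⟩,
    fun {X Y} r => ⟨fun hr {A B} l _ => ?_, fun h => ?_⟩⟩
  · show IsIso (𝟙 B)
    infer_instance
  · haveI : IsIso r := hr
    exact HasLiftingProperty.of_right_iso r l
  · haveI : IsIso r := hr
    exact HasLiftingProperty.of_right_iso r l
  · exact isIso_of_hlp_self r (h r trivial)

lemma wfs_mon_epi : IsWFS (Pmon k) (Pepi k) := by
  refine ⟨fun {A B} f => ?_, fun {A B} l => ⟨fun hl {X Y} r hr => hlp_of_inj_surj l r hl hr,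
    fun h => ?_⟩, fun {X Y} r => ⟨fun hr {A B} l hl => hlp_of_inj_surj l r hl hr, fun h => ?_⟩⟩
  · refine ⟨ModuleCat.of k (Prod (A : Type u) (B : Type u)),
      ModuleCat.ofHom (LinearMap.prod LinearMap.id f.hom :
        (A : Type u) →ₗ[k] Prod (A : Type u) (B : Type u)),
      ModuleCat.ofHom (LinearMap.snd k (A : Type u) (B : Type u)), ?_, ?_, ?_⟩
    · intro x y hxy
      exact congrArg Prod.fst hxy
    · intro b
      exact ⟨(0, b), rfl⟩
    · ext a
      rfl
  · -- l has LLP against all epis ⟹ l injective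
    have hsurj : Pepi k (0 : A ⟶ Zmod k) := fun y => ⟨0, Subsingleton.elim _ _⟩
    have hhlp := h (0 : A ⟶ Zmod k) hsurj
    have sq : CommSq (𝟙 A) l (0 : A ⟶ Zmod k) (0 : B ⟶ Zmod k) := ⟨zhom_ext _ _⟩
    have hlift := (hhlp.sq_hasLift sq).exists_lift.some
    intro x y hxy
    have hx : hlift.l (l x) = x := ConcreteCategory.congr_hom hlift.fac_left x
    have hy : hlift.l (l y) = y := ConcreteCategory.congr_hom hlift.fac_left y
    rw [← hx, ← hy, hxy]
  · -- r has RLP against all monos ⟹ r surjective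
    have hinj : Pmon k (0 : Zmod k ⟶ Y) := fun a b _ => Subsingleton.elim a b
    have hhlp := h (0 : Zmod k ⟶ Y) hinj
    have sq : CommSq (0 : Zmod k ⟶ X) (0 : Zmod k ⟶ Y) r (𝟙 Y) := ⟨zhom_ext' _ _⟩
    have hlift := (hhlp.sq_hasLift sq).exists_lift.some
    intro y
    exact ⟨hlift.l y, ConcreteCategory.congr_hom hlift.fac_right y⟩

lemma wfs_epi_mon : IsWFS (Pepi k) (Pmon k) := by
  refine ⟨fun {A B} f => ?_, fun {A B} l => ⟨fun hl {X Y} r hr => hlp_of_surj_inj l r hl hr,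
    fun h => ?_⟩, fun {X Y} r => ⟨fun hr {A B} l hl => hlp_of_surj_inj l r hl hr, fun h => ?_⟩⟩
  · refine ⟨ModuleCat.of k (LinearMap.range f.hom),
      ModuleCat.ofHom (f.hom.rangeRestrict),
      ModuleCat.ofHom ((LinearMap.range f.hom).subtype), ?_, ?_, ?_⟩
    · exact LinearMap.surjective_rangeRestrict _
    · exact Submodule.injective_subtype _
    · ext a
      rfl
  · -- l has LLP against all monos ⟹ l surjective
    set Rl := LinearMap.range l.hom with hRl
    set rsub : ModuleCat.of k Rl ⟶ B := ModuleCat.ofHom Rl.subtype with hrsub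
    have hinj : Pmon k rsub := by
      intro x y hxy
      exact Subtype.ext hxy
    have hhlp := h rsub hinj
    have sq : CommSq (ModuleCat.ofHom l.hom.rangeRestrict :
        A ⟶ ModuleCat.of k Rl) l rsub (𝟙 B) := by
      constructor
      ext a
      rfl
    have hlift := (hhlp.sq_hasLift sq).exists_lift.some
    intro b
    have h2 : rsub (hlift.l b) = b := ConcreteCategory.congr_hom hlift.fac_right b
    have h3 : (hlift.l b : (Rl : Type u)).1 = b := h2
    exact LinearMap.mem_range.1 (h3 ▸ (hlift.l b : (Rl : Type u)).2)
  · -- r has RLP against all epis ⟹ r injective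
    set Kr := LinearMap.ker r.hom with hKr
    have hsurj : Pepi k (0 : ModuleCat.of k Kr ⟶ Zmod k) :=
      fun y => ⟨0, Subsingleton.elim _ _⟩
    have hhlp := h (0 : ModuleCat.of k Kr ⟶ Zmod k) hsurj
    have sq : CommSq (ModuleCat.ofHom Kr.subtype : ModuleCat.of k Kr ⟶ X) (0 : ModuleCat.of k Kr ⟶ Zmod k)
        r (0 : Zmod k ⟶ Y) := by
      constructor
      ext x
      show r x.1 = ((0 : ModuleCat.of k Kr ⟶ Zmod k) ≫ (0 : Zmod k ⟶ Y)) x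
      rw [Limits.zero_comp]
      erw [LinearMap.zero_apply]
      exact x.2
    have hlift := (hhlp.sq_hasLift sq).exists_lift.some
    have hker : LinearMap.ker r.hom = ⊥ := by
      rw [Submodule.eq_bot_iff]
      intro x hx
      have h2 := ConcreteCategory.congr_hom hlift.fac_left (⟨x, hx⟩ : Kr)
      have h3 : hlift.l ((0 : ModuleCat.of k Kr ⟶ Zmod k) (⟨x, hx⟩ : Kr)) = x := h2
      rw [show ((0 : ModuleCat.of k Kr ⟶ Zmod k) (⟨x, hx⟩ : Kr)) = 0 from Subsingleton.elim _ _,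
        map_zero] at h3
      exact h3.symm
    exact LinearMap.ker_eq_bot.1 hker

/-! ### Classification of weak factorization systems -/

lemma wfs_classification {L R : MorphismProperty (ModuleCat.{u} k)} (h : IsWFS L R) :
    (L = Piso k ∧ R = Pall k) ∨ (L = Pall k ∧ R = Piso k) ∨
    (L = Pmon k ∧ R = Pepi k) ∨ (L = Pepi k ∧ R = Pmon k) := by
  obtain ⟨hfac, hL, hR⟩ := h
  by_cases hp : L (pMap k) <;> by_cases hm : L (mMap k)
  · -- L = all, R = iso
    have hRiso : ∀ {X Y : ModuleCat.{u} k} (r : X ⟶ Y), R r → IsIso r := by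
      intro X Y r hr
      have h1 : HasLiftingProperty (pMap k) r := (hL _).1 hp r hr
      have h2 : HasLiftingProperty (mMap k) r := (hL _).1 hm r hr
      have hinj : Function.Injective r := by
        by_contra hc
        exact not_hlp_of_noninj _ _ pMap_noninj hc h1
      have hsur : Function.Surjective r := by
        by_contra hc
        exact not_hlp_of_nonsurj _ _ mMap_nonsurj hc h2
      exact isIso_of_bijective r ⟨hinj, hsur⟩
    refine Or.inr (Or.inl ⟨mp_ext fun M N f => ⟨fun _ => trivial, fun _ => ?_⟩,
      mp_ext fun M N f => ⟨fun hf => hRiso f hf, fun hf => ?_⟩⟩)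
    · exact (hL f).2 fun r hr => by
        haveI : IsIso r := hRiso r hr
        exact HasLiftingProperty.of_right_iso r f
    · exact (hR f).2 fun l hl => by
        haveI : IsIso f := hf
        exact HasLiftingProperty.of_right_iso f l
  · -- L = epi, R = mon
    have hRinj : ∀ {X Y : ModuleCat.{u} k} (r : X ⟶ Y), R r → Function.Injective r := by
      intro X Y r hr
      by_contra hc
      exact not_hlp_of_noninj _ _ pMap_noninj hc ((hL _).1 hp r hr)
    have hex : ∃ (X Y : ModuleCat.{u} k) (r : X ⟶ Y), R r ∧ ¬ Function.Surjective r := by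
      by_contra hc
      push_neg at hc
      exact hm ((hL _).2 fun r hr => hlp_of_inj_surj _ r mMap_inj (hc _ _ r hr))
    obtain ⟨X₀, Y₀, r₀, hr₀R, hr₀ns⟩ := hex
    have hLepi : ∀ {M N : ModuleCat.{u} k} (l : M ⟶ N), L l → Function.Surjective l := by
      intro M N l hl
      by_contra hc
      exact not_hlp_of_nonsurj _ _ hc hr₀ns ((hL _).1 hl r₀ hr₀R)
    refine Or.inr (Or.inr (Or.inr ⟨mp_ext fun M N f =>
      ⟨fun hf => hLepi f hf, fun hf => (hL f).2 fun r hr => hlp_of_surj_inj f r hf (hRinj r hr)⟩,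
      mp_ext fun M N f =>
      ⟨fun hf => hRinj f hf, fun hf => (hR f).2 fun l hl =>
        hlp_of_surj_inj l f (hLepi l hl) hf⟩⟩))
  · -- L = mon, R = epi
    have hRsur : ∀ {X Y : ModuleCat.{u} k} (r : X ⟶ Y), R r → Function.Surjective r := by
      intro X Y r hr
      by_contra hc
      exact not_hlp_of_nonsurj _ _ mMap_nonsurj hc ((hL _).1 hm r hr)
    have hex : ∃ (X Y : ModuleCat.{u} k) (r : X ⟶ Y), R r ∧ ¬ Function.Injective r := by
      by_contra hc
      push_neg at hc
      exact hp ((hL _).2 fun r hr => hlp_of_surj_inj _ r pMap_surj (hc _ _ r hr))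
    obtain ⟨X₀, Y₀, r₀, hr₀R, hr₀ni⟩ := hex
    have hLmon : ∀ {M N : ModuleCat.{u} k} (l : M ⟶ N), L l → Function.Injective l := by
      intro M N l hl
      by_contra hc
      exact not_hlp_of_noninj _ _ hc hr₀ni ((hL _).1 hl r₀ hr₀R)
    refine Or.inr (Or.inr (Or.inl ⟨mp_ext fun M N f =>
      ⟨fun hf => hLmon f hf, fun hf => (hL f).2 fun r hr => hlp_of_inj_surj f r hf (hRsur r hr)⟩,
      mp_ext fun M N f =>
      ⟨fun hf => hRsur f hf, fun hf => (hR f).2 fun l hl =>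
        hlp_of_inj_surj l f (hLmon l hl) hf⟩⟩))
  · -- L = iso, R = all
    have hex1 : ∃ (X Y : ModuleCat.{u} k) (r : X ⟶ Y), R r ∧ ¬ Function.Injective r := by
      by_contra hc
      push_neg at hc
      exact hp ((hL _).2 fun r hr => hlp_of_surj_inj _ r pMap_surj (hc _ _ r hr))
    have hex2 : ∃ (X Y : ModuleCat.{u} k) (r : X ⟶ Y), R r ∧ ¬ Function.Surjective r := by
      by_contra hc
      push_neg at hc
      exact hm ((hL _).2 fun r hr => hlp_of_inj_surj _ r mMap_inj (hc _ _ r hr))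
    obtain ⟨X₁, Y₁, r₁, hr₁R, hr₁ni⟩ := hex1
    obtain ⟨X₂, Y₂, r₂, hr₂R, hr₂ns⟩ := hex2
    have hLiso : ∀ {M N : ModuleCat.{u} k} (l : M ⟶ N), L l → IsIso l := by
      intro M N l hl
      have hinj : Function.Injective l := by
        by_contra hc
        exact not_hlp_of_noninj _ _ hc hr₁ni ((hL _).1 hl r₁ hr₁R)
      have hsur : Function.Surjective l := by
        by_contra hc
        exact not_hlp_of_nonsurj _ _ hc hr₂ns ((hL _).1 hl r₂ hr₂R)
      exact isIso_of_bijective l ⟨hinj, hsur⟩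
    refine Or.inl ⟨mp_ext fun M N f => ⟨fun hf => hLiso f hf, fun hf => (hL f).2
      fun r hr => by haveI : IsIso f := hf; exact HasLiftingProperty.of_left_iso f r⟩,
      mp_ext fun M N f => ⟨fun _ => trivial, fun _ => (hR f).2 fun l hl => by
        haveI : IsIso l := hLiso l hl; exact HasLiftingProperty.of_left_iso l f⟩⟩

/-! ### Two out of three -/

lemma tot_all : TwoOutOfThree (Pall k) := fun _ _ =>
  ⟨fun _ _ => trivial, fun _ _ => trivial, fun _ _ => trivial⟩

lemma tot_iso : TwoOutOfThree (Piso k) := by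
  intro A B D f g
  refine ⟨fun hf hg => ?_, fun hf hfg => ?_, fun hg hfg => ?_⟩
  · haveI : IsIso f := hf
    haveI : IsIso g := hg
    infer_instance
  · haveI : IsIso f := hf
    haveI : IsIso (f ≫ g) := hfg
    exact IsIso.of_isIso_comp_left f g
  · haveI : IsIso g := hg
    haveI : IsIso (f ≫ g) := hfg
    exact IsIso.of_isIso_comp_right f g

lemma interMP_all_left (Q : MorphismProperty (ModuleCat.{u} k)) : interMP (Pall k) Q = Q :=
  mp_ext fun _ _ _ => ⟨fun h => h.2, fun h => ⟨trivial, h⟩⟩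

lemma interMP_all_right (P : MorphismProperty (ModuleCat.{u} k)) : interMP P (Pall k) = P :=
  mp_ext fun _ _ _ => ⟨fun h => h.1, fun h => ⟨h, trivial⟩⟩

lemma mp_key {P Q : MorphismProperty (ModuleCat.{u} k)} (h : P = Q)
    {M N : ModuleCat.{u} k} (f : M ⟶ N) : P f ↔ Q f := by rw [h]

end VMSAux

open VMSAux in
/-- **The five model structures on the category of `k`-vector spaces (Goodwillie).** -/
theorem vect_model_structure_classification (k : Type u) [Field k]
    (C F W : MorphismProperty (ModuleCat.{u} k)) :
    IsModelStructure C F W ↔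
      ((C = (fun _ _ _ => True) ∧ F = (fun _ _ _ => True) ∧ W = (fun _ _ f => IsIso f)) ∨
       (C = (fun _ _ _ => True) ∧ F = (fun _ _ f => IsIso f) ∧ W = (fun _ _ _ => True)) ∨
       (C = (fun _ _ f => IsIso f) ∧ F = (fun _ _ _ => True) ∧ W = (fun _ _ _ => True)) ∨
       (C = (fun (M N : ModuleCat.{u} k) (f : M ⟶ N) => Function.Injective f) ∧
          F = (fun (M N : ModuleCat.{u} k) (f : M ⟶ N) => Function.Surjective f) ∧
          W = (fun _ _ _ => True)) ∨
       (C = (fun (M N : ModuleCat.{u} k) (f : M ⟶ N) => Function.Surjective f) ∧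
          F = (fun (M N : ModuleCat.{u} k) (f : M ⟶ N) => Function.Injective f) ∧
          W = (fun _ _ _ => True))) := by
  constructor
  · intro h
    obtain ⟨h23, hw1, hw2⟩ := h
    have hA := wfs_classification hw1
    have hB := wfs_classification hw2
    rcases hA with ⟨hA1, hA2⟩ | ⟨hA1, hA2⟩ | ⟨hA1, hA2⟩ | ⟨hA1, hA2⟩ <;>
      rcases hB with ⟨hB1, hB2⟩ | ⟨hB1, hB2⟩ | ⟨hB1, hB2⟩ | ⟨hB1, hB2⟩
    -- (iso, iso) : model 3
    · refine Or.inr (Or.inr (Or.inl ⟨hB1, hA2, mp_ext fun M N f =>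
        ⟨fun _ => trivial, fun _ => ((mp_key hB2 f).2 trivial).2⟩⟩))
    -- (iso, all) : model 1
    · refine Or.inl ⟨hB1, hA2, mp_ext fun M N f =>
        ⟨fun hWf => ?_, fun hf => ((mp_key hA1 f).2 hf).2⟩⟩
      obtain ⟨E, l, r, hl, hr, hc⟩ := hw1.1 f
      have hIl : IsIso l := (mp_key hA1 l).1 hl
      have hWlr : W (l ≫ r) := by rw [hc]; exact hWf
      have hWr : W r := (h23 l r).2.1 hl.2 hWlr
      have hIr : IsIso r := (mp_key hB2 r).1 ⟨hr, hWr⟩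
      show IsIso f
      rw [← hc]
      haveI := hIl
      haveI := hIr
      infer_instance
    -- (iso, mon) : impossible by 2-out-of-3
    · exfalso
      have hWπ : W (piMap k) := ((mp_key hB2 (piMap k)).2 piMap_surj).2
      have hW1 : W (𝟙 (Kmod k)) := ((mp_key hA1 (𝟙 (Kmod k))).2 inferInstance).2
      have hWiπ : W (iMap k ≫ piMap k) := by rw [iMap_comp_piMap]; exact hW1
      have hWi : W (iMap k) := (h23 (iMap k) (piMap k)).2.2 hWπ hWiπ
      have hCi : C (iMap k) := (mp_key hB1 (iMap k)).2 iMap_inj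
      have hiso : IsIso (iMap k) := (mp_key hA1 (iMap k)).1 ⟨hCi, hWi⟩
      exact iMap_nonsurj (bijective_of_iso _ hiso).2
    -- (iso, epi) : impossible by 2-out-of-3
    · exfalso
      have hWi : W (iMap k) := ((mp_key hB2 (iMap k)).2 iMap_inj).2
      have hW1 : W (𝟙 (Kmod k)) := ((mp_key hA1 (𝟙 (Kmod k))).2 inferInstance).2
      have hWiπ : W (iMap k ≫ piMap k) := by rw [iMap_comp_piMap]; exact hW1
      have hWπ : W (piMap k) := (h23 (iMap k) (piMap k)).2.1 hWi hWiπ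
      have hCπ : C (piMap k) := (mp_key hB1 (piMap k)).2 piMap_surj
      have hiso : IsIso (piMap k) := (mp_key hA1 (piMap k)).1 ⟨hCπ, hWπ⟩
      exact piMap_noninj (bijective_of_iso _ hiso).1
    -- (all, iso) : impossible (inclusion)
    · exact absurd (bijective_of_iso _
        ((mp_key hB1 (pMap k)).1 ((mp_key hA1 (pMap k)).2 trivial).1)).1 pMap_noninj
    -- (all, all) : model 2
    · refine Or.inr (Or.inl ⟨hB1, hA2, mp_ext fun M N f =>
        ⟨fun _ => trivial, fun _ => ((mp_key hA1 f).2 trivial).2⟩⟩)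
    -- (all, mon) : impossible (inclusion)
    · exact absurd ((mp_key hB1 (pMap k)).1 ((mp_key hA1 (pMap k)).2 trivial).1) pMap_noninj
    -- (all, epi) : impossible (inclusion)
    · exact absurd ((mp_key hB1 (mMap k)).1 ((mp_key hA1 (mMap k)).2 trivial).1) mMap_nonsurj
    -- (mon, iso) : impossible (inclusion)
    · exact absurd (bijective_of_iso _
        ((mp_key hB1 (mMap k)).1 ((mp_key hA1 (mMap k)).2 mMap_inj).1)).2 mMap_nonsurj
    -- (mon, all) : impossible by 2-out-of-3
    · exfalso
      have hWi : W (iMap k) := ((mp_key hA1 (iMap k)).2 iMap_inj).2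
      have hW1 : W (𝟙 (Kmod k)) := ((mp_key hA1 (𝟙 (Kmod k))).2 (fun a b hab => hab)).2
      have hWiπ : W (iMap k ≫ piMap k) := by rw [iMap_comp_piMap]; exact hW1
      have hWπ : W (piMap k) := (h23 (iMap k) (piMap k)).2.1 hWi hWiπ
      have hFπ : F (piMap k) := (mp_key hA2 (piMap k)).2 piMap_surj
      have hiso : IsIso (piMap k) := (mp_key hB2 (piMap k)).1 ⟨hFπ, hWπ⟩
      exact piMap_noninj (bijective_of_iso _ hiso).1
    -- (mon, mon) : model 4
    · refine Or.inr (Or.inr (Or.inr (Or.inl ⟨hB1, hA2, mp_ext fun M N f =>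
        ⟨fun _ => trivial, fun _ => ?_⟩⟩)))
      obtain ⟨E, l, r, hl, hr, hc⟩ := hw1.1 f
      have hWr : W r := ((mp_key hB2 r).2 ((mp_key hA2 r).1 hr)).2
      have hWlr := (h23 l r).1 hl.2 hWr
      rwa [hc] at hWlr
    -- (mon, epi) : impossible (inclusion)
    · exact absurd ((mp_key hB1 (mMap k)).1 ((mp_key hA1 (mMap k)).2 mMap_inj).1) mMap_nonsurj
    -- (epi, iso) : impossible (inclusion)
    · exact absurd (bijective_of_iso _
        ((mp_key hB1 (pMap k)).1 ((mp_key hA1 (pMap k)).2 pMap_surj).1)).1 pMap_noninj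
    -- (epi, all) : impossible by 2-out-of-3
    · exfalso
      have hWπ : W (piMap k) := ((mp_key hA1 (piMap k)).2 piMap_surj).2
      have hW1 : W (𝟙 (Kmod k)) := ((mp_key hA1 (𝟙 (Kmod k))).2 (fun y => ⟨y, rfl⟩)).2
      have hWiπ : W (iMap k ≫ piMap k) := by rw [iMap_comp_piMap]; exact hW1
      have hWi : W (iMap k) := (h23 (iMap k) (piMap k)).2.2 hWπ hWiπ
      have hFi : F (iMap k) := (mp_key hA2 (iMap k)).2 iMap_inj
      have hiso : IsIso (iMap k) := (mp_key hB2 (iMap k)).1 ⟨hFi, hWi⟩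
      exact iMap_nonsurj (bijective_of_iso _ hiso).2
    -- (epi, mon) : impossible (inclusion)
    · exact absurd ((mp_key hB1 (pMap k)).1 ((mp_key hA1 (pMap k)).2 pMap_surj).1) pMap_noninj
    -- (epi, epi) : model 5
    · refine Or.inr (Or.inr (Or.inr (Or.inr ⟨hB1, hA2, mp_ext fun M N f =>
        ⟨fun _ => trivial, fun _ => ?_⟩⟩)))
      obtain ⟨E, l, r, hl, hr, hc⟩ := hw1.1 f
      have hWr : W r := ((mp_key hB2 r).2 ((mp_key hA2 r).1 hr)).2
      have hWlr := (h23 l r).1 hl.2 hWr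
      rwa [hc] at hWlr
  · intro h
    rcases h with ⟨hC, hF, hW⟩ | ⟨hC, hF, hW⟩ | ⟨hC, hF, hW⟩ | ⟨hC, hF, hW⟩ | ⟨hC, hF, hW⟩ <;>
      subst hC <;> subst hF <;> subst hW
    · refine ⟨tot_iso, ?_, ?_⟩
      · show IsWFS (interMP (Pall k) (Piso k)) (Pall k)
        rw [interMP_all_left]
        exact wfs_iso_all
      · show IsWFS (Pall k) (interMP (Pall k) (Piso k))
        rw [interMP_all_left]
        exact wfs_all_iso
    · refine ⟨tot_all, ?_, ?_⟩
      · show IsWFS (interMP (Pall k) (Pall k)) (Piso k)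
        rw [interMP_all_left]
        exact wfs_all_iso
      · show IsWFS (Pall k) (interMP (Piso k) (Pall k))
        rw [interMP_all_right]
        exact wfs_all_iso
    · refine ⟨tot_all, ?_, ?_⟩
      · show IsWFS (interMP (Piso k) (Pall k)) (Pall k)
        rw [interMP_all_right]
        exact wfs_iso_all
      · show IsWFS (Piso k) (interMP (Pall k) (Pall k))
        rw [interMP_all_left]
        exact wfs_iso_all
    · refine ⟨tot_all, ?_, ?_⟩
      · show IsWFS (interMP (Pmon k) (Pall k)) (Pepi k)
        rw [interMP_all_right]
        exact wfs_mon_epi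
      · show IsWFS (Pmon k) (interMP (Pepi k) (Pall k))
        rw [interMP_all_right]
        exact wfs_mon_epi
    · refine ⟨tot_all, ?_, ?_⟩
      · show IsWFS (interMP (Pepi k) (Pall k)) (Pmon k)
        rw [interMP_all_right]
        exact wfs_epi_mon
      · show IsWFS (Pepi k) (interMP (Pmon k) (Pall k))
        rw [interMP_all_right]
        exact wfs_epi_mon
end

section
/- The localization of the category of types Type u at the class W = {f : A → B | A nonempty or B empty} is equivalent to the walking arrow, i.e., to the category associated with the two-element linear order 0 ≤ 1 (one object for the empty set, one object for all nonempty sets, and a single non-identity morphism from the former to the latter). -/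
universe u

open CategoryTheory

namespace SetLocWalkingArrow

open Classical in
/-- The functor sending a type to `0` if empty and `1` if nonempty. -/
noncomputable def L : Type u ⥤ Fin 2 where
  obj A := if Nonempty A then 1 else 0
  map {A B} f := homOfLE (by
    by_cases h : Nonempty A
    · have hB : Nonempty B := Nonempty.map f h
      simp [h, hB]
    · simp [h])
  map_id := fun _ => Subsingleton.elim _ _
  map_comp := fun _ _ => Subsingleton.elim _ _

/-- The right adjoint of `L`. -/
def R : Fin 2 ⥤ Type u where
  obj x := ULift.{u} (PLift (x = 1))
  map {x y} f := TypeCat.ofHom fun (p : ULift.{u} (PLift (x = 1))) =>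
    (⟨⟨le_antisymm (Fin.le_last _) (p.down.down ▸ leOfHom f)⟩⟩ : ULift.{u} (PLift (y = 1)))
  map_id := fun _ => by ext; exact Subsingleton.elim _ _
  map_comp := fun _ _ => by ext; exact Subsingleton.elim _ _

instance subR (x : Fin 2) : Subsingleton (R.{u}.obj x) :=
  ⟨fun a b => by change ULift.{u} (PLift (x = 1)) at a b; obtain ⟨⟨_⟩⟩ := a; obtain ⟨⟨_⟩⟩ := b; rfl⟩

instance subHomR (A : Type u) (x : Fin 2) : Subsingleton (A ⟶ R.{u}.obj x) :=
  ⟨fun f g => by ext a; exact Subsingleton.elim (f a) (g a)⟩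

instance : R.{u}.Full where
  map_surjective {x y} g := by
    refine ⟨homOfLE ?_, Subsingleton.elim _ _⟩
    by_cases hx : x = 1
    · have hy : y = 1 := (show ULift.{u} (PLift (y = 1)) from g (⟨⟨hx⟩⟩ : ULift.{u} (PLift (x = 1)))).down.down
      rw [hx, hy]
    · have : x = 0 := by omega
      rw [this]
      exact Fin.zero_le _

instance : R.{u}.Faithful where
  map_injective {x y} _ _ _ := Subsingleton.elim _ _

open Classical in
/-- The adjunction `L ⊣ R`. -/
noncomputable def adj : L.{u} ⊣ R.{u} :=
  Adjunction.mkOfHomEquiv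
    { homEquiv := fun A x =>
        { toFun := fun g => TypeCat.ofHom fun a => (⟨⟨le_antisymm (Fin.le_last _) (by
            have hA : L.obj A = 1 := if_pos ⟨a⟩
            exact hA ▸ leOfHom g)⟩⟩ : ULift.{u} (PLift (x = 1)))
          invFun := fun h => homOfLE (by
            by_cases hA : Nonempty A
            · have hx : x = 1 := (show ULift.{u} (PLift (x = 1)) from h hA.some).down.down
              have : L.obj A = 1 := if_pos hA
              rw [this, hx]
            · have : L.obj A = 0 := if_neg hA
              rw [this]
              exact Fin.zero_le _)
          left_inv := fun _ => Subsingleton.elim _ _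
          right_inv := fun _ => Subsingleton.elim _ _ }
      homEquiv_naturality_left_symm := fun _ _ => Subsingleton.elim _ _
      homEquiv_naturality_right := fun _ _ => Subsingleton.elim _ _ }

lemma W_eq :
    (fun A B _ => Nonempty A ∨ IsEmpty B : MorphismProperty (Type u)) =
      (MorphismProperty.isomorphisms (Fin 2)).inverseImage L := by
  ext A B f
  classical
  constructor
  · intro h
    have heq : L.obj A = L.obj B := by
      rcases h with h | h
      · have hB : Nonempty B := Nonempty.map f h
        simp [L, h, hB]
      · have hA : ¬ Nonempty A := fun ⟨a⟩ => h.elim (f a)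
        have hB : ¬ Nonempty B := not_nonempty_iff.mpr h
        simp [L, hA, hB]
    show IsIso (L.map f)
    exact ⟨⟨eqToHom heq.symm, Subsingleton.elim _ _, Subsingleton.elim _ _⟩⟩
  · intro h
    have h : IsIso (L.map f) := h
    obtain ⟨g, _, _⟩ := h.out
    have heq : L.obj A = L.obj B := le_antisymm (leOfHom (L.map f)) (leOfHom g)
    by_cases hA : Nonempty A
    · exact Or.inl hA
    · right
      have hA0 : L.obj A = 0 := if_neg hA
      have hB0 : L.obj B = 0 := heq ▸ hA0
      by_contra hB
      have hB' : Nonempty B := not_isEmpty_iff.mp hB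
      have : L.obj B = 1 := if_pos hB'
      rw [this] at hB0
      exact absurd hB0 (by decide)

end SetLocWalkingArrow

/-- The localization of the category of types at the class
`W = {f : A → B | A nonempty or B empty}` is equivalent to the walking arrow,
i.e., the category associated to the two-element linear order `Fin 2`. -/
theorem set_localization_walking_arrow :
    Nonempty
      (@CategoryTheory.Equivalence (MorphismProperty.Localization
        (fun A B _ => Nonempty A ∨ IsEmpty B : MorphismProperty (Type u))) (Fin 2)
        (MorphismProperty.instCategoryLocalization _) _) := by
  set W := (fun A B _ => Nonempty A ∨ IsEmpty B : MorphismProperty (Type u)) with hWdef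
  haveI : SetLocWalkingArrow.L.{u}.IsLocalization W := by
    rw [hWdef, SetLocWalkingArrow.W_eq]
    exact SetLocWalkingArrow.adj.isLocalization
  letI := MorphismProperty.instCategoryLocalization W
  haveI : (MorphismProperty.Q W).IsLocalization W := Functor.q_isLocalization W
  exact ⟨Localization.uniq (MorphismProperty.Q W) SetLocWalkingArrow.L W⟩
end

section
/- The localization of the category of types Type u at the class of all functions is equivalent to the terminal category, i.e., the category with exactly one object and only the identity morphism. -/
universe u

open CategoryTheory

noncomputable def auxUnitIso :
    let W : MorphismProperty (Type u) := ⊤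
    let L := W.Q
    L ≅ L ⋙ (Functor.star _ ⋙ Functor.fromPUnit (L.obj PUnit)) := by
  intro W L
  refine NatIso.ofComponents (fun X => ?_) (fun {X Y} g => ?_)
  · have : IsIso (L.map (TypeCat.ofHom (fun _ : X => PUnit.unit))) :=
      Localization.inverts L W _ trivial
    exact asIso (L.map (TypeCat.ofHom (fun _ : X => PUnit.unit)))
  · dsimp
    rw [Category.comp_id, ← L.map_comp]
    rfl

/-- The localization of the category of types at the class of all functions is
equivalent to the terminal category (one object, only the identity morphism). -/
theorem set_localization_terminal :
    Nonempty
      ((MorphismProperty.Localization (⊤ : MorphismProperty (Type u))) ≌ Discrete PUnit) := by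
  set W : MorphismProperty (Type u) := ⊤
  set L := W.Q
  refine ⟨CategoryTheory.Equivalence.mk (Functor.star _)
    (Functor.fromPUnit (L.obj PUnit)) ?_ (Functor.punitExt _ _)⟩
  exact Localization.liftNatIso L W L
    (L ⋙ (Functor.star _ ⋙ Functor.fromPUnit (L.obj PUnit))) (𝟭 _) _ auxUnitIso
end
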